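/- Let w = Σ_{1≤i<j≤7} m_{ij}·e_i∧e_j ∈ ⋀²ℂ⁷ satisfy w∧w = 0 in ⋀⁴ℂ⁷ and w∧ω₀ = 0 in ⋀⁶ℂ⁷. Then all 2×2 minors of the 2×6 matrix with rows (m₁₃, m₁₄, m₁₅, m₁₆, m₁₇, −m₃₅) and (m₂₃, m₂₄, m₂₅, m₂₆, m₂₇, m₃₄) vanish; that is, this matrix has rank at most 1. (Hence the projection of Ĝ₂ from the plane spanned by the coordinates c, k, f lands in a hyperplane section of the Segre variety ℙ¹×ℙ⁵.) -/
import Mathlib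

set_option maxHeartbeats 40000000

open ExteriorAlgebra

noncomputable section

/-- The standard basis 1-vectors `eᵢ` of `⋀¹ℂ⁷` (indexed from 0, so `e 0 = e₁`, …, `e 6 = e₇`). -/
def e (i : Fin 7) : ExteriorAlgebra ℂ (Fin 7 → ℂ) := ι ℂ (Pi.single i 1)

/-- The degenerate 4-form
`ω₀ = e₁∧e₂∧e₃∧e₇ + e₄∧e₅∧e₆∧e₇ + e₂∧e₃∧e₅∧e₆ + e₁∧e₃∧e₄∧e₆`. -/
def ω₀ : ExteriorAlgebra ℂ (Fin 7 → ℂ) :=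
  e 0 * e 1 * e 2 * e 6 + e 3 * e 4 * e 5 * e 6 + e 1 * e 2 * e 4 * e 5 + e 0 * e 2 * e 3 * e 5

/-- Coefficient functional in degree `n` attached to an index tuple `S`. -/
def φ {n : ℕ} (S : Fin n → Fin 7) : ExteriorAlgebra ℂ (Fin 7 → ℂ) →ₗ[ℂ] ℂ :=
  liftAlternating (Function.update (fun _ => 0) n
    (Matrix.detRowAlternating.compLinearMap (LinearMap.funLeft ℂ ℂ S)))

lemma phi_eval {n : ℕ} (S : Fin n → Fin 7) (v : Fin n → Fin 7) :
    φ S (ιMulti ℂ n fun p => (Pi.single (v p) 1 : Fin 7 → ℂ)) =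
      Matrix.det (Matrix.of fun p q => (Pi.single (v p) 1 : Fin 7 → ℂ) (S q)) := by
  rw [φ, liftAlternating_apply_ιMulti, Function.update_self,
    AlternatingMap.compLinearMap_apply]
  rfl

lemma phi4r (S : Fin 4 → Fin 7) (a b c d : Fin 7) :
    φ S (e a * (e b * (e c * e d))) =
      Matrix.det (Matrix.of fun p q =>
        (Pi.single ((![a,b,c,d] : Fin 4 → Fin 7) p) 1 : Fin 7 → ℂ) (S q)) := by
  rw [← phi_eval, ιMulti_apply]
  congr 1
  simp [List.ofFn_succ, e, mul_assoc]

lemma phi6r (S : Fin 6 → Fin 7) (a b c d f g : Fin 7) :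
    φ S (e a * (e b * (e c * (e d * (e f * e g))))) =
      Matrix.det (Matrix.of fun p q =>
        (Pi.single ((![a,b,c,d,f,g] : Fin 6 → Fin 7) p) 1 : Fin 7 → ℂ) (S q)) := by
  rw [← phi_eval, ιMulti_apply]
  congr 1
  simp [List.ofFn_succ, e, mul_assoc]

lemma phi4r_zero (S : Fin 4 → Fin 7) (a b c d : Fin 7)
    (h : ∃ p : Fin 4, ∀ q : Fin 4, S q ≠ (![a,b,c,d] : Fin 4 → Fin 7) p) :
    φ S (e a * (e b * (e c * e d))) = 0 := by
  obtain ⟨p, hp⟩ := h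
  rw [phi4r]
  apply Matrix.det_eq_zero_of_row_eq_zero p
  intro q
  rw [Matrix.of_apply, Pi.single_apply, if_neg (hp q)]

lemma phi6r_zero (S : Fin 6 → Fin 7) (a b c d f g : Fin 7)
    (h : ∃ p : Fin 6, ∀ q : Fin 6, S q ≠ (![a,b,c,d,f,g] : Fin 6 → Fin 7) p) :
    φ S (e a * (e b * (e c * (e d * (e f * e g))))) = 0 := by
  obtain ⟨p, hp⟩ := h
  rw [phi6r]
  apply Matrix.det_eq_zero_of_row_eq_zero p
  intro q
  rw [Matrix.of_apply, Pi.single_apply, if_neg (hp q)]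

lemma det_id {n : ℕ} (S : Fin n → Fin 7) (hS : Function.Injective S) :
    Matrix.det (Matrix.of fun p q =>
      (Pi.single (S p) 1 : Fin 7 → ℂ) (S q)) = 1 := by
  have : (Matrix.of fun p q => (Pi.single (S p) 1 : Fin 7 → ℂ) (S q)) = 1 := by
    funext p q
    simp only [Matrix.of_apply, Pi.single_apply, Matrix.one_apply, hS.eq_iff]
    by_cases h : q = p
    · simp [h]
    · simp [h, Ne.symm h]
  rw [this, Matrix.det_one]

lemma e_sq (i : Fin 7) : e i * e i = 0 := ι_sq_zero _

lemma e_sq' (i : Fin 7) (x : ExteriorAlgebra ℂ (Fin 7 → ℂ)) : e i * (e i * x) = 0 := by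
  rw [← mul_assoc, e_sq, zero_mul]

lemma e_swap {i j : Fin 7} (_h : j < i) : e i * e j = -(e j * e i) :=
  eq_neg_of_add_eq_zero_left (by rw [add_comm]; exact ι_add_mul_swap _ _)

lemma e_swap' {i j : Fin 7} (h : j < i) (x : ExteriorAlgebra ℂ (Fin 7 → ℂ)) :
    e i * (e j * x) = -(e j * (e i * x)) := by
  rw [← mul_assoc, e_swap h, neg_mul, mul_assoc]

/-- If `w = Σ_{i<j} m_{ij}·eᵢ∧eⱼ` satisfies `w∧w = 0` and `w∧ω₀ = 0`, then the 2×6 matrix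
with rows `(m₁₃, m₁₄, m₁₅, m₁₆, m₁₇, −m₃₅)` and `(m₂₃, m₂₄, m₂₅, m₂₆, m₂₇, m₃₄)`
(0-indexed here) has all its 2×2 minors equal to zero, i.e. has rank at most 1:
the projection of `Ĝ₂` from the plane `(c,k,f)` lands in a hyperplane section of `ℙ¹×ℙ⁵`. -/
theorem stmt_8 (m : Fin 7 → Fin 7 → ℂ) (w : ExteriorAlgebra ℂ (Fin 7 → ℂ))
    (hw : w = ∑ i : Fin 7, ∑ j : Fin 7, if i < j then m i j • (e i * e j) else 0)
    (h1 : w * w = 0) (h2 : w * ω₀ = 0) :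
    ∀ k l : Fin 6,
      ![m 0 2, m 0 3, m 0 4, m 0 5, m 0 6, -(m 2 4)] k *
        ![m 1 2, m 1 3, m 1 4, m 1 5, m 1 6, m 2 3] l -
      ![m 0 2, m 0 3, m 0 4, m 0 5, m 0 6, -(m 2 4)] l *
        ![m 1 2, m 1 3, m 1 4, m 1 5, m 1 6, m 2 3] k = 0 := by
  have hw' : w =
      m 0 1 • (e 0 * e 1) +
      m 0 2 • (e 0 * e 2) +
      m 0 3 • (e 0 * e 3) +
      m 0 4 • (e 0 * e 4) +
      m 0 5 • (e 0 * e 5) +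
      m 0 6 • (e 0 * e 6) +
      m 1 2 • (e 1 * e 2) +
      m 1 3 • (e 1 * e 3) +
      m 1 4 • (e 1 * e 4) +
      m 1 5 • (e 1 * e 5) +
      m 1 6 • (e 1 * e 6) +
      m 2 3 • (e 2 * e 3) +
      m 2 4 • (e 2 * e 4) +
      m 2 5 • (e 2 * e 5) +
      m 2 6 • (e 2 * e 6) +
      m 3 4 • (e 3 * e 4) +
      m 3 5 • (e 3 * e 5) +
      m 3 6 • (e 3 * e 6) +
      m 4 5 • (e 4 * e 5) +
      m 4 6 • (e 4 * e 6) +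
      m 5 6 • (e 5 * e 6) := by
    rw [hw]
    simp (config := { decide := true }) only [Fin.sum_univ_seven, if_true, if_false,
      ite_true, ite_false, add_zero, zero_add]
    module
  have hww : w * w =
      (m 0 1 * m 2 3 - m 0 2 * m 1 3 + m 0 3 * m 1 2 + m 1 2 * m 0 3 - m 1 3 * m 0 2 + m 2 3 * m 0 1) • (e 0 * (e 1 * (e 2 * e 3))) +
        (m 0 1 * m 2 4 - m 0 2 * m 1 4 + m 0 4 * m 1 2 + m 1 2 * m 0 4 - m 1 4 * m 0 2 + m 2 4 * m 0 1) • (e 0 * (e 1 * (e 2 * e 4))) +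
        (m 0 1 * m 2 5 - m 0 2 * m 1 5 + m 0 5 * m 1 2 + m 1 2 * m 0 5 - m 1 5 * m 0 2 + m 2 5 * m 0 1) • (e 0 * (e 1 * (e 2 * e 5))) +
        (m 0 1 * m 2 6 - m 0 2 * m 1 6 + m 0 6 * m 1 2 + m 1 2 * m 0 6 - m 1 6 * m 0 2 + m 2 6 * m 0 1) • (e 0 * (e 1 * (e 2 * e 6))) +
        (m 0 1 * m 3 4 - m 0 3 * m 1 4 + m 0 4 * m 1 3 + m 1 3 * m 0 4 - m 1 4 * m 0 3 + m 3 4 * m 0 1) • (e 0 * (e 1 * (e 3 * e 4))) +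
        (m 0 1 * m 3 5 - m 0 3 * m 1 5 + m 0 5 * m 1 3 + m 1 3 * m 0 5 - m 1 5 * m 0 3 + m 3 5 * m 0 1) • (e 0 * (e 1 * (e 3 * e 5))) +
        (m 0 1 * m 3 6 - m 0 3 * m 1 6 + m 0 6 * m 1 3 + m 1 3 * m 0 6 - m 1 6 * m 0 3 + m 3 6 * m 0 1) • (e 0 * (e 1 * (e 3 * e 6))) +
        (m 0 1 * m 4 5 - m 0 4 * m 1 5 + m 0 5 * m 1 4 + m 1 4 * m 0 5 - m 1 5 * m 0 4 + m 4 5 * m 0 1) • (e 0 * (e 1 * (e 4 * e 5))) +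
        (m 0 1 * m 4 6 - m 0 4 * m 1 6 + m 0 6 * m 1 4 + m 1 4 * m 0 6 - m 1 6 * m 0 4 + m 4 6 * m 0 1) • (e 0 * (e 1 * (e 4 * e 6))) +
        (m 0 1 * m 5 6 - m 0 5 * m 1 6 + m 0 6 * m 1 5 + m 1 5 * m 0 6 - m 1 6 * m 0 5 + m 5 6 * m 0 1) • (e 0 * (e 1 * (e 5 * e 6))) +
        (m 0 2 * m 3 4 - m 0 3 * m 2 4 + m 0 4 * m 2 3 + m 2 3 * m 0 4 - m 2 4 * m 0 3 + m 3 4 * m 0 2) • (e 0 * (e 2 * (e 3 * e 4))) +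
        (m 0 2 * m 3 5 - m 0 3 * m 2 5 + m 0 5 * m 2 3 + m 2 3 * m 0 5 - m 2 5 * m 0 3 + m 3 5 * m 0 2) • (e 0 * (e 2 * (e 3 * e 5))) +
        (m 0 2 * m 3 6 - m 0 3 * m 2 6 + m 0 6 * m 2 3 + m 2 3 * m 0 6 - m 2 6 * m 0 3 + m 3 6 * m 0 2) • (e 0 * (e 2 * (e 3 * e 6))) +
        (m 0 2 * m 4 5 - m 0 4 * m 2 5 + m 0 5 * m 2 4 + m 2 4 * m 0 5 - m 2 5 * m 0 4 + m 4 5 * m 0 2) • (e 0 * (e 2 * (e 4 * e 5))) +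
        (m 0 2 * m 4 6 - m 0 4 * m 2 6 + m 0 6 * m 2 4 + m 2 4 * m 0 6 - m 2 6 * m 0 4 + m 4 6 * m 0 2) • (e 0 * (e 2 * (e 4 * e 6))) +
        (m 0 2 * m 5 6 - m 0 5 * m 2 6 + m 0 6 * m 2 5 + m 2 5 * m 0 6 - m 2 6 * m 0 5 + m 5 6 * m 0 2) • (e 0 * (e 2 * (e 5 * e 6))) +
        (m 0 3 * m 4 5 - m 0 4 * m 3 5 + m 0 5 * m 3 4 + m 3 4 * m 0 5 - m 3 5 * m 0 4 + m 4 5 * m 0 3) • (e 0 * (e 3 * (e 4 * e 5))) +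
        (m 0 3 * m 4 6 - m 0 4 * m 3 6 + m 0 6 * m 3 4 + m 3 4 * m 0 6 - m 3 6 * m 0 4 + m 4 6 * m 0 3) • (e 0 * (e 3 * (e 4 * e 6))) +
        (m 0 3 * m 5 6 - m 0 5 * m 3 6 + m 0 6 * m 3 5 + m 3 5 * m 0 6 - m 3 6 * m 0 5 + m 5 6 * m 0 3) • (e 0 * (e 3 * (e 5 * e 6))) +
        (m 0 4 * m 5 6 - m 0 5 * m 4 6 + m 0 6 * m 4 5 + m 4 5 * m 0 6 - m 4 6 * m 0 5 + m 5 6 * m 0 4) • (e 0 * (e 4 * (e 5 * e 6))) +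
        (m 1 2 * m 3 4 - m 1 3 * m 2 4 + m 1 4 * m 2 3 + m 2 3 * m 1 4 - m 2 4 * m 1 3 + m 3 4 * m 1 2) • (e 1 * (e 2 * (e 3 * e 4))) +
        (m 1 2 * m 3 5 - m 1 3 * m 2 5 + m 1 5 * m 2 3 + m 2 3 * m 1 5 - m 2 5 * m 1 3 + m 3 5 * m 1 2) • (e 1 * (e 2 * (e 3 * e 5))) +
        (m 1 2 * m 3 6 - m 1 3 * m 2 6 + m 1 6 * m 2 3 + m 2 3 * m 1 6 - m 2 6 * m 1 3 + m 3 6 * m 1 2) • (e 1 * (e 2 * (e 3 * e 6))) +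
        (m 1 2 * m 4 5 - m 1 4 * m 2 5 + m 1 5 * m 2 4 + m 2 4 * m 1 5 - m 2 5 * m 1 4 + m 4 5 * m 1 2) • (e 1 * (e 2 * (e 4 * e 5))) +
        (m 1 2 * m 4 6 - m 1 4 * m 2 6 + m 1 6 * m 2 4 + m 2 4 * m 1 6 - m 2 6 * m 1 4 + m 4 6 * m 1 2) • (e 1 * (e 2 * (e 4 * e 6))) +
        (m 1 2 * m 5 6 - m 1 5 * m 2 6 + m 1 6 * m 2 5 + m 2 5 * m 1 6 - m 2 6 * m 1 5 + m 5 6 * m 1 2) • (e 1 * (e 2 * (e 5 * e 6))) +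
        (m 1 3 * m 4 5 - m 1 4 * m 3 5 + m 1 5 * m 3 4 + m 3 4 * m 1 5 - m 3 5 * m 1 4 + m 4 5 * m 1 3) • (e 1 * (e 3 * (e 4 * e 5))) +
        (m 1 3 * m 4 6 - m 1 4 * m 3 6 + m 1 6 * m 3 4 + m 3 4 * m 1 6 - m 3 6 * m 1 4 + m 4 6 * m 1 3) • (e 1 * (e 3 * (e 4 * e 6))) +
        (m 1 3 * m 5 6 - m 1 5 * m 3 6 + m 1 6 * m 3 5 + m 3 5 * m 1 6 - m 3 6 * m 1 5 + m 5 6 * m 1 3) • (e 1 * (e 3 * (e 5 * e 6))) +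
        (m 1 4 * m 5 6 - m 1 5 * m 4 6 + m 1 6 * m 4 5 + m 4 5 * m 1 6 - m 4 6 * m 1 5 + m 5 6 * m 1 4) • (e 1 * (e 4 * (e 5 * e 6))) +
        (m 2 3 * m 4 5 - m 2 4 * m 3 5 + m 2 5 * m 3 4 + m 3 4 * m 2 5 - m 3 5 * m 2 4 + m 4 5 * m 2 3) • (e 2 * (e 3 * (e 4 * e 5))) +
        (m 2 3 * m 4 6 - m 2 4 * m 3 6 + m 2 6 * m 3 4 + m 3 4 * m 2 6 - m 3 6 * m 2 4 + m 4 6 * m 2 3) • (e 2 * (e 3 * (e 4 * e 6))) +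
        (m 2 3 * m 5 6 - m 2 5 * m 3 6 + m 2 6 * m 3 5 + m 3 5 * m 2 6 - m 3 6 * m 2 5 + m 5 6 * m 2 3) • (e 2 * (e 3 * (e 5 * e 6))) +
        (m 2 4 * m 5 6 - m 2 5 * m 4 6 + m 2 6 * m 4 5 + m 4 5 * m 2 6 - m 4 6 * m 2 5 + m 5 6 * m 2 4) • (e 2 * (e 4 * (e 5 * e 6))) +
        (m 3 4 * m 5 6 - m 3 5 * m 4 6 + m 3 6 * m 4 5 + m 4 5 * m 3 6 - m 4 6 * m 3 5 + m 5 6 * m 3 4) • (e 3 * (e 4 * (e 5 * e 6))) := by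
    rw [hw']
    simp (config := { decide := true }) only [smul_mul_assoc, mul_smul_comm, smul_smul, mul_add, add_mul, mul_assoc,
      e_sq, e_sq', e_swap, e_swap', mul_neg, neg_mul, smul_neg, neg_neg, mul_zero, zero_mul,
      smul_zero, add_zero, zero_add, neg_zero]
    module
  have h0 := hww.symm.trans h1
  have hwo : w * ω₀ =
      (m 0 3 + m 1 4) • (e 0 * (e 1 * (e 2 * (e 3 * (e 4 * e 5))))) +
        (m 3 4) • (e 0 * (e 1 * (e 2 * (e 3 * (e 4 * e 6))))) +
        (-m 1 6 + m 3 5) • (e 0 * (e 1 * (e 2 * (e 3 * (e 5 * e 6))))) +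
        (m 0 6 + m 4 5) • (e 0 * (e 1 * (e 2 * (e 4 * (e 5 * e 6))))) +
        (m 0 1) • (e 0 * (e 1 * (e 3 * (e 4 * (e 5 * e 6))))) +
        (m 0 2 - m 4 6) • (e 0 * (e 2 * (e 3 * (e 4 * (e 5 * e 6))))) +
        (m 1 2 + m 3 6) • (e 1 * (e 2 * (e 3 * (e 4 * (e 5 * e 6))))) := by
    rw [hw', ω₀]
    simp (config := { decide := true }) only [smul_mul_assoc, mul_smul_comm, smul_smul, mul_add, add_mul, mul_assoc,
      e_sq, e_sq', e_swap, e_swap', mul_neg, neg_mul, smul_neg, neg_neg, mul_zero, zero_mul,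
      smul_zero, add_zero, zero_add, neg_zero]
    module
  have k0 := hwo.symm.trans h2
  have P0123 : m 0 1 * m 2 3 - m 0 2 * m 1 3 + m 0 3 * m 1 2 = 0 := by
    have hid : φ (![0,1,2,3] : Fin 4 → Fin 7) (e 0 * (e 1 * (e 2 * e 3))) = 1 := by
      have := det_id (![0,1,2,3] : Fin 4 → Fin 7) (by decide)
      rw [phi4r]
      exact this
    have h := congrArg (φ (![0,1,2,3] : Fin 4 → Fin 7)) h0
    simp (config := { decide := true }) only [map_add, map_smul, map_zero, smul_eq_mul,
      phi4r_zero, hid, mul_one, mul_zero, add_zero, zero_add] at h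
    linear_combination h / 2
  have P0124 : m 0 1 * m 2 4 - m 0 2 * m 1 4 + m 0 4 * m 1 2 = 0 := by
    have hid : φ (![0,1,2,4] : Fin 4 → Fin 7) (e 0 * (e 1 * (e 2 * e 4))) = 1 := by
      have := det_id (![0,1,2,4] : Fin 4 → Fin 7) (by decide)
      rw [phi4r]
      exact this
    have h := congrArg (φ (![0,1,2,4] : Fin 4 → Fin 7)) h0
    simp (config := { decide := true }) only [map_add, map_smul, map_zero, smul_eq_mul,
      phi4r_zero, hid, mul_one, mul_zero, add_zero, zero_add] at h
    linear_combination h / 2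
  have P0125 : m 0 1 * m 2 5 - m 0 2 * m 1 5 + m 0 5 * m 1 2 = 0 := by
    have hid : φ (![0,1,2,5] : Fin 4 → Fin 7) (e 0 * (e 1 * (e 2 * e 5))) = 1 := by
      have := det_id (![0,1,2,5] : Fin 4 → Fin 7) (by decide)
      rw [phi4r]
      exact this
    have h := congrArg (φ (![0,1,2,5] : Fin 4 → Fin 7)) h0
    simp (config := { decide := true }) only [map_add, map_smul, map_zero, smul_eq_mul,
      phi4r_zero, hid, mul_one, mul_zero, add_zero, zero_add] at h
    linear_combination h / 2
  have P0126 : m 0 1 * m 2 6 - m 0 2 * m 1 6 + m 0 6 * m 1 2 = 0 := by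
    have hid : φ (![0,1,2,6] : Fin 4 → Fin 7) (e 0 * (e 1 * (e 2 * e 6))) = 1 := by
      have := det_id (![0,1,2,6] : Fin 4 → Fin 7) (by decide)
      rw [phi4r]
      exact this
    have h := congrArg (φ (![0,1,2,6] : Fin 4 → Fin 7)) h0
    simp (config := { decide := true }) only [map_add, map_smul, map_zero, smul_eq_mul,
      phi4r_zero, hid, mul_one, mul_zero, add_zero, zero_add] at h
    linear_combination h / 2
  have P0134 : m 0 1 * m 3 4 - m 0 3 * m 1 4 + m 0 4 * m 1 3 = 0 := by
    have hid : φ (![0,1,3,4] : Fin 4 → Fin 7) (e 0 * (e 1 * (e 3 * e 4))) = 1 := by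
      have := det_id (![0,1,3,4] : Fin 4 → Fin 7) (by decide)
      rw [phi4r]
      exact this
    have h := congrArg (φ (![0,1,3,4] : Fin 4 → Fin 7)) h0
    simp (config := { decide := true }) only [map_add, map_smul, map_zero, smul_eq_mul,
      phi4r_zero, hid, mul_one, mul_zero, add_zero, zero_add] at h
    linear_combination h / 2
  have P0135 : m 0 1 * m 3 5 - m 0 3 * m 1 5 + m 0 5 * m 1 3 = 0 := by
    have hid : φ (![0,1,3,5] : Fin 4 → Fin 7) (e 0 * (e 1 * (e 3 * e 5))) = 1 := by
      have := det_id (![0,1,3,5] : Fin 4 → Fin 7) (by decide)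
      rw [phi4r]
      exact this
    have h := congrArg (φ (![0,1,3,5] : Fin 4 → Fin 7)) h0
    simp (config := { decide := true }) only [map_add, map_smul, map_zero, smul_eq_mul,
      phi4r_zero, hid, mul_one, mul_zero, add_zero, zero_add] at h
    linear_combination h / 2
  have P0145 : m 0 1 * m 4 5 - m 0 4 * m 1 5 + m 0 5 * m 1 4 = 0 := by
    have hid : φ (![0,1,4,5] : Fin 4 → Fin 7) (e 0 * (e 1 * (e 4 * e 5))) = 1 := by
      have := det_id (![0,1,4,5] : Fin 4 → Fin 7) (by decide)
      rw [phi4r]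
      exact this
    have h := congrArg (φ (![0,1,4,5] : Fin 4 → Fin 7)) h0
    simp (config := { decide := true }) only [map_add, map_smul, map_zero, smul_eq_mul,
      phi4r_zero, hid, mul_one, mul_zero, add_zero, zero_add] at h
    linear_combination h / 2
  have P0156 : m 0 1 * m 5 6 - m 0 5 * m 1 6 + m 0 6 * m 1 5 = 0 := by
    have hid : φ (![0,1,5,6] : Fin 4 → Fin 7) (e 0 * (e 1 * (e 5 * e 6))) = 1 := by
      have := det_id (![0,1,5,6] : Fin 4 → Fin 7) (by decide)
      rw [phi4r]
      exact this
    have h := congrArg (φ (![0,1,5,6] : Fin 4 → Fin 7)) h0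
    simp (config := { decide := true }) only [map_add, map_smul, map_zero, smul_eq_mul,
      phi4r_zero, hid, mul_one, mul_zero, add_zero, zero_add] at h
    linear_combination h / 2
  have P0234 : m 0 2 * m 3 4 - m 0 3 * m 2 4 + m 0 4 * m 2 3 = 0 := by
    have hid : φ (![0,2,3,4] : Fin 4 → Fin 7) (e 0 * (e 2 * (e 3 * e 4))) = 1 := by
      have := det_id (![0,2,3,4] : Fin 4 → Fin 7) (by decide)
      rw [phi4r]
      exact this
    have h := congrArg (φ (![0,2,3,4] : Fin 4 → Fin 7)) h0
    simp (config := { decide := true }) only [map_add, map_smul, map_zero, smul_eq_mul,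
      phi4r_zero, hid, mul_one, mul_zero, add_zero, zero_add] at h
    linear_combination h / 2
  have P0235 : m 0 2 * m 3 5 - m 0 3 * m 2 5 + m 0 5 * m 2 3 = 0 := by
    have hid : φ (![0,2,3,5] : Fin 4 → Fin 7) (e 0 * (e 2 * (e 3 * e 5))) = 1 := by
      have := det_id (![0,2,3,5] : Fin 4 → Fin 7) (by decide)
      rw [phi4r]
      exact this
    have h := congrArg (φ (![0,2,3,5] : Fin 4 → Fin 7)) h0
    simp (config := { decide := true }) only [map_add, map_smul, map_zero, smul_eq_mul,
      phi4r_zero, hid, mul_one, mul_zero, add_zero, zero_add] at h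
    linear_combination h / 2
  have P0345 : m 0 3 * m 4 5 - m 0 4 * m 3 5 + m 0 5 * m 3 4 = 0 := by
    have hid : φ (![0,3,4,5] : Fin 4 → Fin 7) (e 0 * (e 3 * (e 4 * e 5))) = 1 := by
      have := det_id (![0,3,4,5] : Fin 4 → Fin 7) (by decide)
      rw [phi4r]
      exact this
    have h := congrArg (φ (![0,3,4,5] : Fin 4 → Fin 7)) h0
    simp (config := { decide := true }) only [map_add, map_smul, map_zero, smul_eq_mul,
      phi4r_zero, hid, mul_one, mul_zero, add_zero, zero_add] at h
    linear_combination h / 2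
  have P1234 : m 1 2 * m 3 4 - m 1 3 * m 2 4 + m 1 4 * m 2 3 = 0 := by
    have hid : φ (![1,2,3,4] : Fin 4 → Fin 7) (e 1 * (e 2 * (e 3 * e 4))) = 1 := by
      have := det_id (![1,2,3,4] : Fin 4 → Fin 7) (by decide)
      rw [phi4r]
      exact this
    have h := congrArg (φ (![1,2,3,4] : Fin 4 → Fin 7)) h0
    simp (config := { decide := true }) only [map_add, map_smul, map_zero, smul_eq_mul,
      phi4r_zero, hid, mul_one, mul_zero, add_zero, zero_add] at h
    linear_combination h / 2
  have P1245 : m 1 2 * m 4 5 - m 1 4 * m 2 5 + m 1 5 * m 2 4 = 0 := by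
    have hid : φ (![1,2,4,5] : Fin 4 → Fin 7) (e 1 * (e 2 * (e 4 * e 5))) = 1 := by
      have := det_id (![1,2,4,5] : Fin 4 → Fin 7) (by decide)
      rw [phi4r]
      exact this
    have h := congrArg (φ (![1,2,4,5] : Fin 4 → Fin 7)) h0
    simp (config := { decide := true }) only [map_add, map_smul, map_zero, smul_eq_mul,
      phi4r_zero, hid, mul_one, mul_zero, add_zero, zero_add] at h
    linear_combination h / 2
  have P1345 : m 1 3 * m 4 5 - m 1 4 * m 3 5 + m 1 5 * m 3 4 = 0 := by
    have hid : φ (![1,3,4,5] : Fin 4 → Fin 7) (e 1 * (e 3 * (e 4 * e 5))) = 1 := by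
      have := det_id (![1,3,4,5] : Fin 4 → Fin 7) (by decide)
      rw [phi4r]
      exact this
    have h := congrArg (φ (![1,3,4,5] : Fin 4 → Fin 7)) h0
    simp (config := { decide := true }) only [map_add, map_smul, map_zero, smul_eq_mul,
      phi4r_zero, hid, mul_one, mul_zero, add_zero, zero_add] at h
    linear_combination h / 2
  have P2345 : m 2 3 * m 4 5 - m 2 4 * m 3 5 + m 2 5 * m 3 4 = 0 := by
    have hid : φ (![2,3,4,5] : Fin 4 → Fin 7) (e 2 * (e 3 * (e 4 * e 5))) = 1 := by
      have := det_id (![2,3,4,5] : Fin 4 → Fin 7) (by decide)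
      rw [phi4r]
      exact this
    have h := congrArg (φ (![2,3,4,5] : Fin 4 → Fin 7)) h0
    simp (config := { decide := true }) only [map_add, map_smul, map_zero, smul_eq_mul,
      phi4r_zero, hid, mul_one, mul_zero, add_zero, zero_add] at h
    linear_combination h / 2
  have P2346 : m 2 3 * m 4 6 - m 2 4 * m 3 6 + m 2 6 * m 3 4 = 0 := by
    have hid : φ (![2,3,4,6] : Fin 4 → Fin 7) (e 2 * (e 3 * (e 4 * e 6))) = 1 := by
      have := det_id (![2,3,4,6] : Fin 4 → Fin 7) (by decide)
      rw [phi4r]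
      exact this
    have h := congrArg (φ (![2,3,4,6] : Fin 4 → Fin 7)) h0
    simp (config := { decide := true }) only [map_add, map_smul, map_zero, smul_eq_mul,
      phi4r_zero, hid, mul_one, mul_zero, add_zero, zero_add] at h
    linear_combination h / 2
  have L012345 : m 0 3 + m 1 4 = 0 := by
    have hid : φ (![0,1,2,3,4,5] : Fin 6 → Fin 7) (e 0 * (e 1 * (e 2 * (e 3 * (e 4 * e 5))))) = 1 := by
      have := det_id (![0,1,2,3,4,5] : Fin 6 → Fin 7) (by decide)
      rw [phi6r]
      exact this
    have h := congrArg (φ (![0,1,2,3,4,5] : Fin 6 → Fin 7)) k0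
    simp (config := { decide := true }) only [map_add, map_smul, map_zero, smul_eq_mul,
      phi6r_zero, hid, mul_one, mul_zero, add_zero, zero_add] at h
    linear_combination h
  have L012346 : m 3 4 = 0 := by
    have hid : φ (![0,1,2,3,4,6] : Fin 6 → Fin 7) (e 0 * (e 1 * (e 2 * (e 3 * (e 4 * e 6))))) = 1 := by
      have := det_id (![0,1,2,3,4,6] : Fin 6 → Fin 7) (by decide)
      rw [phi6r]
      exact this
    have h := congrArg (φ (![0,1,2,3,4,6] : Fin 6 → Fin 7)) k0
    simp (config := { decide := true }) only [map_add, map_smul, map_zero, smul_eq_mul,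
      phi6r_zero, hid, mul_one, mul_zero, add_zero, zero_add] at h
    linear_combination h
  have L012356 : -m 1 6 + m 3 5 = 0 := by
    have hid : φ (![0,1,2,3,5,6] : Fin 6 → Fin 7) (e 0 * (e 1 * (e 2 * (e 3 * (e 5 * e 6))))) = 1 := by
      have := det_id (![0,1,2,3,5,6] : Fin 6 → Fin 7) (by decide)
      rw [phi6r]
      exact this
    have h := congrArg (φ (![0,1,2,3,5,6] : Fin 6 → Fin 7)) k0
    simp (config := { decide := true }) only [map_add, map_smul, map_zero, smul_eq_mul,
      phi6r_zero, hid, mul_one, mul_zero, add_zero, zero_add] at h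
    linear_combination h
  have L012456 : m 0 6 + m 4 5 = 0 := by
    have hid : φ (![0,1,2,4,5,6] : Fin 6 → Fin 7) (e 0 * (e 1 * (e 2 * (e 4 * (e 5 * e 6))))) = 1 := by
      have := det_id (![0,1,2,4,5,6] : Fin 6 → Fin 7) (by decide)
      rw [phi6r]
      exact this
    have h := congrArg (φ (![0,1,2,4,5,6] : Fin 6 → Fin 7)) k0
    simp (config := { decide := true }) only [map_add, map_smul, map_zero, smul_eq_mul,
      phi6r_zero, hid, mul_one, mul_zero, add_zero, zero_add] at h
    linear_combination h
  have L013456 : m 0 1 = 0 := by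
    have hid : φ (![0,1,3,4,5,6] : Fin 6 → Fin 7) (e 0 * (e 1 * (e 3 * (e 4 * (e 5 * e 6))))) = 1 := by
      have := det_id (![0,1,3,4,5,6] : Fin 6 → Fin 7) (by decide)
      rw [phi6r]
      exact this
    have h := congrArg (φ (![0,1,3,4,5,6] : Fin 6 → Fin 7)) k0
    simp (config := { decide := true }) only [map_add, map_smul, map_zero, smul_eq_mul,
      phi6r_zero, hid, mul_one, mul_zero, add_zero, zero_add] at h
    linear_combination h
  have L023456 : m 0 2 - m 4 6 = 0 := by
    have hid : φ (![0,2,3,4,5,6] : Fin 6 → Fin 7) (e 0 * (e 2 * (e 3 * (e 4 * (e 5 * e 6))))) = 1 := by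
      have := det_id (![0,2,3,4,5,6] : Fin 6 → Fin 7) (by decide)
      rw [phi6r]
      exact this
    have h := congrArg (φ (![0,2,3,4,5,6] : Fin 6 → Fin 7)) k0
    simp (config := { decide := true }) only [map_add, map_smul, map_zero, smul_eq_mul,
      phi6r_zero, hid, mul_one, mul_zero, add_zero, zero_add] at h
    linear_combination h
  have L123456 : m 1 2 + m 3 6 = 0 := by
    have hid : φ (![1,2,3,4,5,6] : Fin 6 → Fin 7) (e 1 * (e 2 * (e 3 * (e 4 * (e 5 * e 6))))) = 1 := by
      have := det_id (![1,2,3,4,5,6] : Fin 6 → Fin 7) (by decide)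
      rw [phi6r]
      exact this
    have h := congrArg (φ (![1,2,3,4,5,6] : Fin 6 → Fin 7)) k0
    simp (config := { decide := true }) only [map_add, map_smul, map_zero, smul_eq_mul,
      phi6r_zero, hid, mul_one, mul_zero, add_zero, zero_add] at h
    linear_combination h
  intro k l
  fin_cases k <;> fin_cases l <;>
    norm_num <;>
  first
  | ring1
  | linear_combination - P0123 + m 2 3 * L013456
  | linear_combination - P0124 + m 2 4 * L013456
  | linear_combination - P0125 + m 2 5 * L013456
  | linear_combination - P0126 + m 2 6 * L013456
  | linear_combination - P0126 - P0235 - P1245 - m 2 5 * L012345 + m 0 2 * L012356 + m 1 2 * L012456 + m 2 6 * L013456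
  | linear_combination - P0134 + m 0 1 * L012346
  | linear_combination - P0135 + m 0 1 * L012356 + m 1 6 * L013456
  | linear_combination - P0145 + m 0 1 * L012456 - m 0 6 * L013456
  | linear_combination - P0156 + m 5 6 * L013456
  | linear_combination - P0234 - m 2 4 * L012345 + m 0 2 * L012346
  | linear_combination - P0345 - m 0 6 * L012345 + m 0 5 * L012346 - m 0 4 * L012356 + m 0 3 * L012456
  | linear_combination - P1234 + m 2 3 * L012345 + m 1 2 * L012346
  | linear_combination - P1345 - m 3 5 * L012345 + m 1 5 * L012346 + m 0 3 * L012356 + m 1 3 * L012456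
  | linear_combination - P2345 + m 2 5 * L012346 - m 2 4 * L012356 + m 2 3 * L012456
  | linear_combination - P2346 + m 2 6 * L012346 - m 2 3 * L023456 - m 2 4 * L123456
  | linear_combination P0123 - m 2 3 * L013456
  | linear_combination P0124 - m 2 4 * L013456
  | linear_combination P0125 - m 2 5 * L013456
  | linear_combination P0126 + P0235 + P1245 + m 2 5 * L012345 - m 0 2 * L012356 - m 1 2 * L012456 - m 2 6 * L013456
  | linear_combination P0126 - m 2 6 * L013456
  | linear_combination P0134 - m 0 1 * L012346
  | linear_combination P0135 - m 0 1 * L012356 - m 1 6 * L013456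
  | linear_combination P0145 - m 0 1 * L012456 + m 0 6 * L013456
  | linear_combination P0156 - m 5 6 * L013456
  | linear_combination P0234 + m 2 4 * L012345 - m 0 2 * L012346
  | linear_combination P0345 + m 0 6 * L012345 - m 0 5 * L012346 + m 0 4 * L012356 - m 0 3 * L012456
  | linear_combination P1234 - m 2 3 * L012345 - m 1 2 * L012346
  | linear_combination P1345 + m 3 5 * L012345 - m 1 5 * L012346 - m 0 3 * L012356 - m 1 3 * L012456
  | linear_combination P2345 - m 2 5 * L012346 + m 2 4 * L012356 - m 2 3 * L012456
  | linear_combination P2346 - m 2 6 * L012346 + m 2 3 * L023456 + m 2 4 * L123456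

end
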